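/- arXiv:2605.31184 — 4 statements merged into one kernel-verified Lean document; each statement's English description precedes it below -/
import Mathlib

section
/- Let μ be a probability measure on a measurable space 𝒳 and let m : 𝒳 → [−1, 1] be measurable and satisfy the margin condition with exponent γ > 0 and constant c* ≥ 0. Then, with C = max(c*, 1)·2^{1+γ}/(1+γ), for every v ≥ 0 one has ∫_{{x : m(x) ≠ 0}} max(2v − |m(x)|, 0) μ(dx) ≤ C·v^{1+γ}. -/
/-!
By the layer-cake formula the integral is `∫₀^{2v} μ({m ≠ 0} ∩ {2v - |m| > t}) dt`. For `0 < t < 2v`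
that set lies in `{0 < |m| ≤ 2v - t}`, whose measure the margin condition (extended past `1` by
`|m| ≤ 1`, at the price of `max c* 1`) bounds by `max(c*, 1) (2v - t)^γ`; integrating gives
`max(c*, 1) (2v)^{1+γ} / (1+γ)`.
-/

open MeasureTheory Set

theorem integral_le_intervalIntegral_of_meas_lt_le {α : Type*} [MeasurableSpace α]
    {ν : Measure α} {f : α → ℝ} {g : ℝ → ℝ} {T : ℝ} (hT : 0 ≤ T) (hf_nonneg : 0 ≤ f)
    (hf_le : ∀ x, f x ≤ T) (hf : AEMeasurable f ν) (hg : IntervalIntegrable g volume 0 T)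
    (hg_nonneg : ∀ t ∈ Ioc 0 T, 0 ≤ g t)
    (h : ∀ t ∈ Ioo 0 T, ν {x | t < f x} ≤ ENNReal.ofReal (g t)) :
    ∫ x, f x ∂ν ≤ ∫ t in 0..T, g t := by
  have hg' : IntegrableOn g (Ioc 0 T) := (intervalIntegrable_iff_integrableOn_Ioc_of_le hT).1 hg
  have h_pointwise : ∀ t ∈ Ioi (0 : ℝ),
      ν {x | t < f x} ≤ (Ioc 0 T).indicator (fun t ↦ ENNReal.ofReal (g t)) t := by
    intro t ht
    rcases lt_or_ge t T with htT | hTt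
    · rw [indicator_of_mem (show t ∈ Ioc 0 T from ⟨ht, htT.le⟩)]
      exact h t ⟨ht, htT⟩
    · have hempty : {x | t < f x} = ∅ :=
        eq_empty_of_forall_notMem fun x hx ↦ (hf_le x).not_gt (hTt.trans_lt hx)
      simp [hempty]
  have h_lintegral : ∫⁻ x, ENNReal.ofReal (f x) ∂ν ≤ ENNReal.ofReal (∫ t in Ioc 0 T, g t) :=
    calc ∫⁻ x, ENNReal.ofReal (f x) ∂ν = ∫⁻ t in Ioi 0, ν {x | t < f x} :=
          lintegral_eq_lintegral_meas_lt ν (.of_forall hf_nonneg) hf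
      _ ≤ ∫⁻ t in Ioi 0, (Ioc 0 T).indicator (fun t ↦ ENNReal.ofReal (g t)) t :=
          setLIntegral_mono' measurableSet_Ioi h_pointwise
      _ = ∫⁻ t in Ioc 0 T, ENNReal.ofReal (g t) := by
          rw [lintegral_indicator measurableSet_Ioc, Measure.restrict_restrict measurableSet_Ioc,
            inter_eq_self_of_subset_left Ioc_subset_Ioi_self]
      _ = ENNReal.ofReal (∫ t in Ioc 0 T, g t) :=
          (ofReal_integral_eq_lintegral_ofReal hg'
            ((ae_restrict_iff' measurableSet_Ioc).2 (.of_forall hg_nonneg))).symm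
  rw [integral_eq_lintegral_of_nonneg_ae (.of_forall hf_nonneg) hf.aestronglyMeasurable,
    intervalIntegral.integral_of_le hT]
  calc (∫⁻ x, ENNReal.ofReal (f x) ∂ν).toReal ≤ (ENNReal.ofReal (∫ t in Ioc 0 T, g t)).toReal :=
        ENNReal.toReal_mono ENNReal.ofReal_ne_top h_lintegral
    _ = ∫ t in Ioc 0 T, g t := ENNReal.toReal_ofReal (setIntegral_nonneg measurableSet_Ioc hg_nonneg)

theorem integral_sub_rpow {T γ : ℝ} (hγ : -1 < γ) :
    ∫ t in 0..T, (T - t) ^ γ = T ^ (γ + 1) / (γ + 1) := by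
  rw [intervalIntegral.integral_comp_sub_left (fun t ↦ t ^ γ), sub_self, sub_zero,
    integral_rpow (.inl hγ), Real.zero_rpow (by linarith), sub_zero]

theorem intervalIntegrable_sub_rpow {T γ : ℝ} (hγ : -1 < γ) :
    IntervalIntegrable (fun t ↦ (T - t) ^ γ) volume 0 T := by
  simpa using (intervalIntegral.intervalIntegrable_rpow' (a := T) (b := 0) hγ).comp_sub_left T

theorem measure_abs_pos_le_le_of_margin {𝒳 : Type*} [MeasurableSpace 𝒳] {μ : Measure 𝒳}
    [IsFiniteMeasure μ] {m : 𝒳 → ℝ} (hm_bound : ∀ x, |m x| ≤ 1) {γ c : ℝ} (hγ : 0 ≤ γ)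
    (hmargin : ∀ t : ℝ, 0 < t → t ≤ 1 → (μ {x | 0 < |m x| ∧ |m x| ≤ t}).toReal ≤ c * t ^ γ)
    {s : ℝ} (hs : 0 < s) :
    μ {x | 0 < |m x| ∧ |m x| ≤ s} ≤ ENNReal.ofReal (max c 1 * s ^ γ) := by
  rw [ENNReal.le_ofReal_iff_toReal_le (measure_ne_top μ _) (by positivity)]
  rcases le_or_gt s 1 with hs1 | hs1
  · exact (hmargin s hs hs1).trans
      (mul_le_mul_of_nonneg_right (le_max_left _ _) (by positivity))
  · have hset : {x | 0 < |m x| ∧ |m x| ≤ s} = {x | 0 < |m x| ∧ |m x| ≤ 1} := by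
      ext x
      simp only [mem_ofPred_eq, and_congr_right_iff]
      exact fun _ ↦ ⟨fun _ ↦ hm_bound x, fun h ↦ h.trans hs1.le⟩
    calc (μ {x | 0 < |m x| ∧ |m x| ≤ s}).toReal ≤ c * 1 ^ γ := hset ▸ hmargin 1 one_pos le_rfl
      _ ≤ max c 1 * s ^ γ := by
        rw [Real.one_rpow, mul_one]
        exact (le_max_left c 1).trans (le_mul_of_one_le_right (by positivity)
          (Real.one_le_rpow hs1.le hγ))

theorem margin_condition_integral_bound_general
    {𝒳 : Type*} [MeasurableSpace 𝒳] (μ : Measure 𝒳) [IsProbabilityMeasure μ]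
    (m : 𝒳 → ℝ) (hm_meas : Measurable m) (hm_bound : ∀ x, |m x| ≤ 1)
    (γ cstar : ℝ) (hγ : 0 < γ)
    (hmargin : ∀ t : ℝ, 0 < t → t ≤ 1 →
      (μ {x | 0 < |m x| ∧ |m x| ≤ t}).toReal ≤ cstar * t ^ γ) :
    ∀ v : ℝ, 0 ≤ v →
      ∫ x in {x | m x ≠ 0}, max (2 * v - |m x|) 0 ∂μ
        ≤ (max cstar 1 * 2 ^ (1 + γ) / (1 + γ)) * v ^ (1 + γ) := by
  intro v hv
  have hS : MeasurableSet {x | m x ≠ 0} := (hm_meas (measurableSet_singleton 0)).compl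
  have h_superlevel : ∀ t ∈ Ioo 0 (2 * v),
      μ.restrict {x | m x ≠ 0} {x | t < max (2 * v - |m x|) 0} ≤
        ENNReal.ofReal (max cstar 1 * (2 * v - t) ^ γ) := by
    rintro t ⟨ht, htv⟩
    rw [Measure.restrict_apply' hS]
    have hsub : {x | t < max (2 * v - |m x|) 0} ∩ {x | m x ≠ 0} ⊆
        {x | 0 < |m x| ∧ |m x| ≤ 2 * v - t} := by
      rintro x ⟨hx, hx0⟩
      have : t < 2 * v - |m x| := (lt_max_iff.1 hx).resolve_right ht.not_gt
      exact ⟨abs_pos.2 hx0, by linarith⟩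
    exact (measure_mono hsub).trans
      (measure_abs_pos_le_le_of_margin hm_bound hγ.le hmargin (sub_pos.2 htv))
  calc ∫ x in {x | m x ≠ 0}, max (2 * v - |m x|) 0 ∂μ
      ≤ ∫ t in 0..2 * v, max cstar 1 * (2 * v - t) ^ γ :=
        integral_le_intervalIntegral_of_meas_lt_le (by positivity) (fun x ↦ le_max_right _ _)
          (fun x ↦ max_le (by linarith [abs_nonneg (m x)]) (by positivity))
          ((measurable_const.sub hm_meas.abs).max measurable_const).aemeasurable
          ((intervalIntegrable_sub_rpow (by linarith)).const_mul _)
          (fun t ht ↦ mul_nonneg (by positivity) (Real.rpow_nonneg (sub_nonneg.2 ht.2) γ))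
          h_superlevel
    _ = (max cstar 1 * 2 ^ (1 + γ) / (1 + γ)) * v ^ (1 + γ) := by
        rw [intervalIntegral.integral_const_mul, integral_sub_rpow (by linarith),
          Real.mul_rpow zero_le_two hv]
        ring_nf

/-- If `m : 𝒳 → [-1,1]` satisfies the margin condition with exponent `γ > 0`
and constant `c* ≥ 0`, then with `C = max(c*,1)·2^{1+γ}/(1+γ)`, for every `v ≥ 0`,
`∫_{m ≠ 0} max(2v − |m(x)|, 0) μ(dx) ≤ C v^{1+γ}`. -/
theorem margin_condition_integral_bound
    {𝒳 : Type*} [MeasurableSpace 𝒳] (μ : Measure 𝒳) [IsProbabilityMeasure μ]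
    (m : 𝒳 → ℝ) (hm_meas : Measurable m) (hm_bound : ∀ x, |m x| ≤ 1)
    (γ cstar : ℝ) (hγ : 0 < γ) (hcstar : 0 ≤ cstar)
    (hmargin : ∀ t : ℝ, 0 < t → t ≤ 1 →
      (μ {x | 0 < |m x| ∧ |m x| ≤ t}).toReal ≤ cstar * t ^ γ) :
    ∀ v : ℝ, 0 ≤ v →
      ∫ x in {x | m x ≠ 0}, max (2 * v - |m x|) 0 ∂μ
        ≤ (max cstar 1 * 2 ^ (1 + γ) / (1 + γ)) * v ^ (1 + γ) :=
  margin_condition_integral_bound_general μ m hm_meas hm_bound γ cstar hγ hmargin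
end

section
/- Assume that H_x is continuous on [0,∞) for every x ∈ 𝒳, that m satisfies the generalized Lipschitz condition with a function h such that h^{1+γ} is concave on [0,1], and that m satisfies the margin condition with exponent γ > 0 and constant c* ≥ 0. Let g_NN(x) = sign m(X'_{k,1}(x)), where X'_{k,1}(x) denotes the nearest prototype to x among X'_1, …, X'_k (ties broken in favour of the smaller index). Then there exists a constant C > 0, depending only on c* and γ, such that for every k ≥ 1, E[L(g_NN)] − L* ≤ C·h(1/k)^{1+γ}. -/
/-!
Where the 1-NN rule `sign m(X'_{k,1}(x))` and the Bayes rule disagree, `m(x)` and `m(X'_{k,1}(x))`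
have opposite signs, so `|m(x)| ≤ h(U)` with `U = H_x(ρ(x, X'_{k,1}(x)))`; and the excess risk
of a plug-in rule is `∫ |m|` over its disagreement set with the Bayes rule. For fixed `x`,
continuity of `H_x` gives `P(U > u) ≤ (1 - u)^k`. Slicing `U` into the layers
`(j/k, (j+1)/k]` and applying the margin condition on each layer bounds the expected excess risk
by `c* ∑_j (1 - j/k)^k h((j+1)/k)^{1+γ}`. Concavity of `h^{1+γ}` with `h ≥ 0` gives
`h((j+1)/k)^{1+γ} ≤ (j+1) h(1/k)^{1+γ}`, and `∑_j (1 - j/k)^k (j+1) ≤ ∑_j (3/4)^j = 4`.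
-/

open MeasureTheory Set Filter

noncomputable def sgn (u : ℝ) : ℝ := if 0 ≤ u then 1 else -1

/-- Index of the nearest point among `p 0, …, p (k-1)` to `x`, ties broken in favour of the
smaller index. -/
noncomputable def nearestIdx {𝒳 : Type*} [MetricSpace 𝒳] {k : ℕ} (hk : 0 < k)
    (p : Fin k → 𝒳) (x : 𝒳) : Fin k :=
  (Finset.univ.filter fun j => ∀ i, dist x (p j) ≤ dist x (p i)).min'
    (by
      obtain ⟨j, -, hj⟩ := Finset.exists_min_image Finset.univ (fun j => dist x (p j))
        (Finset.univ_nonempty_iff.mpr (Fin.pos_iff_nonempty.mp hk))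
      exact ⟨j, Finset.mem_filter.mpr ⟨Finset.mem_univ _, fun i => hj i (Finset.mem_univ i)⟩⟩)

open ProbabilityTheory Metric

section Sign

lemma sgn_of_nonneg {u : ℝ} (hu : 0 ≤ u) : sgn u = 1 := if_pos hu

lemma sgn_of_neg {u : ℝ} (hu : u < 0) : sgn u = -1 := if_neg hu.not_ge

lemma sgn_eq_one_or_eq_neg_one (u : ℝ) : sgn u = 1 ∨ sgn u = -1 := by
  unfold sgn; split_ifs <;> simp

lemma measurable_sgn : Measurable sgn :=
  Measurable.ite measurableSet_Ici measurable_const measurable_const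

lemma sgn_mul_self (u : ℝ) : sgn u * u = |u| := by
  rcases le_or_gt 0 u with hu | hu
  · rw [sgn_of_nonneg hu, one_mul, abs_of_nonneg hu]
  · rw [sgn_of_neg hu, neg_one_mul, abs_of_neg hu]

lemma abs_le_abs_sub_of_sgn_ne {a b : ℝ} (h : sgn a ≠ sgn b) : |a| ≤ |a - b| := by
  rcases le_or_gt 0 a with ha | ha <;> rcases le_or_gt 0 b with hb | hb
  · exact absurd (by rw [sgn_of_nonneg ha, sgn_of_nonneg hb]) h
  · rw [abs_of_nonneg ha, abs_of_nonneg (by linarith)]; linarith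
  · rw [abs_of_neg ha, abs_of_neg (by linarith)]; linarith
  · exact absurd (by rw [sgn_of_neg ha, sgn_of_neg hb]) h

end Sign

section Nearest

variable {𝒳 : Type*} [MetricSpace 𝒳] {k : ℕ}

/-- The nearest prototype `X'_{k,1}(x)`. -/
noncomputable def nearestProto (hk : 0 < k) (p : Fin k → 𝒳) (x : 𝒳) : 𝒳 :=
  p (nearestIdx hk p x)

lemma dist_nearestProto_le (hk : 0 < k) (p : Fin k → 𝒳) (x : 𝒳) (i : Fin k) :
    dist x (nearestProto hk p x) ≤ dist x (p i) := by
  unfold nearestProto nearestIdx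
  obtain ⟨-, hmin⟩ := Finset.mem_filter.mp <|
    Finset.min'_mem (Finset.univ.filter fun j => ∀ i, dist x (p j) ≤ dist x (p i)) _
  exact hmin i

lemma nearestIdx_eq_iff (hk : 0 < k) (p : Fin k → 𝒳) (x : 𝒳) (j : Fin k) :
    nearestIdx hk p x = j ↔
      (∀ i, dist x (p j) ≤ dist x (p i)) ∧
        ∀ i, (∀ l, dist x (p i) ≤ dist x (p l)) → j ≤ i := by
  constructor
  · rintro rfl
    exact ⟨dist_nearestProto_le hk p x, fun i hi =>
      Finset.min'_le _ _ (Finset.mem_filter.mpr ⟨Finset.mem_univ _, hi⟩)⟩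
  · rintro ⟨hmin, hleast⟩
    refine le_antisymm (Finset.min'_le _ _ (Finset.mem_filter.mpr ⟨Finset.mem_univ _, hmin⟩)) ?_
    exact Finset.le_min' _ _ _ fun i hi => hleast i (Finset.mem_filter.mp hi).2

variable [MeasurableSpace 𝒳] [OpensMeasurableSpace 𝒳] [SecondCountableTopology 𝒳]
  {α : Type*} [MeasurableSpace α]

lemma measurable_nearestIdx (hk : 0 < k) {p : Fin k → α → 𝒳} {x : α → 𝒳}
    (hp : ∀ j, Measurable (p j)) (hx : Measurable x) :
    Measurable fun a => nearestIdx hk (fun j => p j a) (x a) := by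
  have hle : ∀ i l, Measurable fun a => dist (x a) (p i a) ≤ dist (x a) (p l a) := fun i l =>
    measurableSet_setOfPred.mp (measurableSet_le (hx.dist (hp i)) (hx.dist (hp l)))
  refine measurable_to_countable' fun j => ?_
  simp only [preimage, mem_singleton_iff, nearestIdx_eq_iff]
  exact measurableSet_setOfPred.mpr <| (Measurable.forall fun i => hle j i).and <|
    Measurable.forall fun i => (Measurable.forall fun l => hle i l).imp measurable_const

lemma measurable_nearestProto (hk : 0 < k) {p : Fin k → α → 𝒳} {x : α → 𝒳}
    (hp : ∀ j, Measurable (p j)) (hx : Measurable x) :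
    Measurable fun a => nearestProto hk (fun j => p j a) (x a) :=
  (measurable_from_prod_countable_left (f := fun q : α × Fin k => p q.2 q.1) hp).comp
    (measurable_id.prodMk (measurable_nearestIdx hk hp hx))

end Nearest

lemma ae_le_one_of_setIntegral_le {α : Type*} [MeasurableSpace α] {μ : Measure α}
    [IsFiniteMeasure μ] {f : α → ℝ} (hf : Measurable f)
    (h : ∀ s, MeasurableSet s → ∫ x in s, f x ∂μ ≤ μ.real s) : ∀ᵐ x ∂μ, f x ≤ 1 := by
  -- `f` is integrable on each `{|f| ≤ N}`, where the comparison of set integrals applies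
  have hN : ∀ N : ℕ, ∀ᵐ x ∂μ, |f x| ≤ N → f x ≤ 1 := by
    intro N
    have hB : MeasurableSet {x | |f x| ≤ N} := measurableSet_le hf.abs measurable_const
    refine (ae_restrict_iff' hB).mp ?_
    refine ae_le_of_forall_setIntegral_le ?_ (integrable_const 1) fun s hs _ => ?_
    · refine Integrable.of_bound hf.aestronglyMeasurable N ?_
      filter_upwards [ae_restrict_mem hB] with x hx using hx
    · rw [Measure.restrict_restrict hs, setIntegral_const, smul_eq_mul, mul_one]
      exact h _ (hs.inter hB)
  filter_upwards [ae_all_iff.mpr hN] with x hx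
  exact hx _ (Nat.le_ceil _)

lemma measureReal_ne_eq_of_sign {β : Type*} [MeasurableSpace β] {ν : Measure β}
    [IsProbabilityMeasure ν] {a b : β → ℝ} (ha : Measurable a) (hb : Measurable b)
    (ha1 : ∀ᵐ ω ∂ν, a ω = 1 ∨ a ω = -1) (hb1 : ∀ᵐ ω ∂ν, b ω = 1 ∨ b ω = -1) :
    ν.real {ω | a ω ≠ b ω} = (1 - ∫ ω, a ω * b ω ∂ν) / 2 := by
  have hab : Integrable (fun ω => a ω * b ω) ν := by
    refine Integrable.of_bound (ha.mul hb).aestronglyMeasurable 1 ?_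
    filter_upwards [ha1, hb1] with ω h1 h2
    rcases h1 with h1 | h1 <;> rcases h2 with h2 | h2 <;> simp [h1, h2]
  have hS : MeasurableSet {ω | a ω ≠ b ω} := (measurableSet_eq_fun ha hb).compl
  have hrhs : (1 - ∫ ω, a ω * b ω ∂ν) / 2 = ∫ ω, (1 - a ω * b ω) / 2 ∂ν := by
    rw [integral_div, integral_sub (integrable_const 1) hab, integral_const, probReal_univ,
      one_smul]
  rw [hrhs, ← integral_indicator_one hS]
  refine integral_congr_ae ?_
  filter_upwards [ha1, hb1] with ω h1 h2
  rcases h1 with h1 | h1 <;> rcases h2 with h2 | h2 <;> norm_num [h1, h2, indicator]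

section Regression

variable {𝒳 : Type*} [MeasurableSpace 𝒳]

/-- `m x = E[Y | X = x]` for `(X, Y) ∼ lam` with labels `±1`, and `μ` is the law of `X`. -/
structure IsRegressionFunction (lam : Measure (𝒳 × ℝ)) (μ : Measure 𝒳) (m : 𝒳 → ℝ) : Prop where
  map_fst : μ = lam.map Prod.fst
  measurable : Measurable m
  ae_label : ∀ᵐ p ∂lam, p.2 = 1 ∨ p.2 = -1
  setIntegral_snd : ∀ A, MeasurableSet A → ∫ p in {q | q.1 ∈ A}, p.2 ∂lam = ∫ x in A, m x ∂μ

variable {lam : Measure (𝒳 × ℝ)} [IsProbabilityMeasure lam] {μ : Measure 𝒳} {m : 𝒳 → ℝ}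

namespace IsRegressionFunction

lemma isProbabilityMeasure (hR : IsRegressionFunction lam μ m) : IsProbabilityMeasure μ := by
  rw [hR.map_fst]
  exact Measure.isProbabilityMeasure_map measurable_fst.aemeasurable

lemma ae_abs_le_one (hR : IsRegressionFunction lam μ m) : ∀ᵐ x ∂μ, |m x| ≤ 1 := by
  have := hR.isProbabilityMeasure
  have hint : ∀ A, MeasurableSet A → |∫ x in A, m x ∂μ| ≤ μ.real A := by
    intro A hA
    rw [← hR.setIntegral_snd A hA, hR.map_fst, map_measureReal_apply measurable_fst hA]
    have hY : ∀ᵐ p ∂lam, p ∈ {q : 𝒳 × ℝ | q.1 ∈ A} → ‖p.2‖ ≤ 1 := by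
      filter_upwards [hR.ae_label] with p hp _
      rcases hp with hp | hp <;> simp [hp]
    simpa [preimage] using norm_setIntegral_le_of_norm_le_const_ae' (measure_lt_top lam _) hY
  have hle := ae_le_one_of_setIntegral_le (μ := μ) hR.measurable fun s hs =>
    (le_abs_self _).trans (hint s hs)
  have hge := ae_le_one_of_setIntegral_le (μ := μ) hR.measurable.neg fun s hs => by
    simp only [Pi.neg_apply]
    rw [integral_neg]
    exact (neg_le_abs _).trans (hint s hs)
  filter_upwards [hle, hge] with x hle hge
  exact abs_le.mpr ⟨by simp only [Pi.neg_apply] at hge; linarith, hle⟩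

lemma integrable (hR : IsRegressionFunction lam μ m) : Integrable m μ :=
  have := hR.isProbabilityMeasure
  Integrable.of_bound hR.measurable.aestronglyMeasurable 1 hR.ae_abs_le_one

lemma integral_mul_snd (hR : IsRegressionFunction lam μ m) {g : 𝒳 → ℝ} (hg : Measurable g)
    (hg1 : ∀ x, g x = 1 ∨ g x = -1) :
    ∫ p, g p.1 * p.2 ∂lam = ∫ x, g x * m x ∂μ := by
  have := hR.isProbabilityMeasure
  set G := {x | g x = 1}
  have hG : MeasurableSet G := hg (measurableSet_singleton 1)
  have hS : MeasurableSet {q : 𝒳 × ℝ | q.1 ∈ G} := measurable_fst hG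
  have hbound : ∀ᵐ p ∂lam, ‖g p.1 * p.2‖ ≤ 1 := by
    filter_upwards [hR.ae_label] with p hp
    rcases hg1 p.1 with h | h <;> rcases hp with hp | hp <;> simp [h, hp]
  have hint : Integrable (fun p : 𝒳 × ℝ => g p.1 * p.2) lam :=
    Integrable.of_bound ((hg.comp measurable_fst).mul measurable_snd).aestronglyMeasurable 1 hbound
  have hgm : Integrable (fun x => g x * m x) μ :=
    hR.integrable.bdd_mul hg.aestronglyMeasurable (c := 1) (ae_of_all _ fun x => by
      rcases hg1 x with h | h <;> simp [h])
  have hneg : ∀ x ∉ G, g x = -1 := fun x hx => (hg1 x).resolve_left hx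
  rw [← integral_add_compl hS hint, ← integral_add_compl hG hgm]
  congr 1
  · rw [setIntegral_congr_fun hS (g := fun p => p.2) fun p (hp : g p.1 = 1) => by simp [hp],
      setIntegral_congr_fun hG (g := m) fun x (hx : g x = 1) => by simp [hx]]
    exact hR.setIntegral_snd G hG
  · rw [setIntegral_congr_fun hS.compl (g := fun p => -p.2) fun p hp => by simp [hneg p.1 hp],
      setIntegral_congr_fun hG.compl (g := fun x => -m x) fun x hx => by simp [hneg x hx],
      integral_neg, integral_neg]
    exact congrArg _ (hR.setIntegral_snd Gᶜ hG.compl)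

theorem excess_risk_eq (hR : IsRegressionFunction lam μ m) {g : 𝒳 → ℝ} (hg : Measurable g)
    (hg1 : ∀ x, g x = 1 ∨ g x = -1) :
    lam.real {p | g p.1 ≠ p.2} - lam.real {p | sgn (m p.1) ≠ p.2}
      = ∫ x in {x | g x ≠ sgn (m x)}, |m x| ∂μ := by
  have := hR.isProbabilityMeasure
  have hs : Measurable fun x => sgn (m x) := measurable_sgn.comp hR.measurable
  have hs1 : ∀ x, sgn (m x) = 1 ∨ sgn (m x) = -1 := fun x => sgn_eq_one_or_eq_neg_one _
  have hD : MeasurableSet {x | g x ≠ sgn (m x)} := (measurableSet_eq_fun hg hs).compl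
  have hbdd : ∀ {f : 𝒳 → ℝ}, Measurable f → (∀ x, f x = 1 ∨ f x = -1) →
      Integrable (fun x => f x * m x) μ := fun hf hf1 =>
    hR.integrable.bdd_mul hf.aestronglyMeasurable (c := 1) (ae_of_all _ fun x => by
      rcases hf1 x with h | h <;> simp [h])
  rw [measureReal_ne_eq_of_sign (a := fun p => g p.1) (hg.comp (f := Prod.fst) measurable_fst)
      measurable_snd (ae_of_all _ fun p => hg1 p.1) hR.ae_label,
    measureReal_ne_eq_of_sign (a := fun p => sgn (m p.1)) (hs.comp (f := Prod.fst) measurable_fst)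
      measurable_snd (ae_of_all _ fun p => hs1 p.1) hR.ae_label,
    hR.integral_mul_snd hg hg1, hR.integral_mul_snd hs hs1,
    ← integral_indicator hD]
  have hpt : ∀ x, {x | g x ≠ sgn (m x)}.indicator (fun x => |m x|) x
      = (sgn (m x) * m x - g x * m x) / 2 := by
    intro x
    by_cases hx : g x = sgn (m x)
    · rw [indicator_of_notMem (not_not.mpr hx), hx, sub_self, zero_div]
    · have hgx : g x = -sgn (m x) := by
        rcases hg1 x with h | h <;> rcases hs1 x with h' | h' <;> simp_all
      rw [indicator_of_mem (show x ∈ {x | g x ≠ sgn (m x)} from hx), hgx, neg_mul, sgn_mul_self]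
      ring
  rw [integral_congr_ae (ae_of_all _ hpt), integral_div, integral_sub (hbdd hs hs1) (hbdd hg hg1)]
  ring

end IsRegressionFunction

end Regression

section Envelope

/-- Extending `h` constantly outside `[0, 1]` makes it monotone, hence measurable, on `ℝ`; the
cap at `1` keeps the levels inside the range `t ≤ 1` of the margin condition. -/
noncomputable def capEnvelope (h : ℝ → ℝ) (u : ℝ) : ℝ := min (h (projIcc 0 1 zero_le_one u)) 1

variable {h : ℝ → ℝ}

lemma capEnvelope_of_mem {u : ℝ} (hu : u ∈ Icc (0 : ℝ) 1) : capEnvelope h u = min (h u) 1 := by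
  rw [capEnvelope, projIcc_of_mem _ hu]

lemma capEnvelope_le_one (u : ℝ) : capEnvelope h u ≤ 1 := min_le_right _ _

lemma capEnvelope_nonneg (hh : ∀ s ∈ Icc (0 : ℝ) 1, 0 ≤ h s) (u : ℝ) : 0 ≤ capEnvelope h u :=
  le_min (hh _ (projIcc 0 1 zero_le_one u).2) zero_le_one

lemma monotone_capEnvelope (hh : MonotoneOn h (Icc 0 1)) : Monotone (capEnvelope h) :=
  fun _ _ hab => min_le_min_right 1 <|
    hh (projIcc 0 1 zero_le_one _).2 (projIcc 0 1 zero_le_one _).2 (monotone_projIcc _ hab)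

end Envelope

section MarginCut

noncomputable def marginCut (T : ℝ → ℝ) (a v : ℝ) : ℝ := (Ioc 0 (T v)).indicator (fun _ => T v) a

variable {T : ℝ → ℝ}

lemma marginCut_nonneg (a v : ℝ) : 0 ≤ marginCut T a v := by
  unfold marginCut
  by_cases ha : a ∈ Ioc 0 (T v)
  · rw [indicator_of_mem ha]; exact ha.1.le.trans ha.2
  · rw [indicator_of_notMem ha]

lemma marginCut_le_one (hT : ∀ v, T v ≤ 1) (a v : ℝ) : marginCut T a v ≤ 1 := by
  unfold marginCut
  by_cases ha : a ∈ Ioc 0 (T v)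
  · rw [indicator_of_mem ha]; exact hT v
  · rw [indicator_of_notMem ha]; exact zero_le_one

lemma le_marginCut (hT : Monotone T) {a u v : ℝ} (ha : a ∈ Ioc 0 (T u)) (huv : u ≤ v) :
    T u ≤ marginCut T a v := by
  rw [marginCut, indicator_of_mem (show a ∈ Ioc 0 (T v) from ⟨ha.1, ha.2.trans (hT huv)⟩)]
  exact hT huv

lemma Measurable.marginCut {α : Type*} [MeasurableSpace α] (hT : Measurable T) {f g : α → ℝ}
    (hf : Measurable f) (hg : Measurable g) : Measurable fun q => marginCut T (f q) (g q) := by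
  have hS : MeasurableSet {q | f q ∈ Ioc 0 (T (g q))} :=
    (measurableSet_lt measurable_const hf).inter (measurableSet_le hf (hT.comp hg))
  exact Measurable.indicator (hT.comp hg) hS

lemma marginCut_le_layers (hT : Monotone T) {k : ℕ} (hk : 0 < k) {a u : ℝ} (hu : u ≤ 1) :
    marginCut T a u ≤ marginCut T a (1 / k) +
      ∑ j ∈ Finset.Icc 1 (k - 1), if (j : ℝ) / k < u then marginCut T a ((j + 1) / k) else 0 := by
  have hsum : 0 ≤ ∑ j ∈ Finset.Icc 1 (k - 1),
      if (j : ℝ) / k < u then marginCut T a ((j + 1) / k) else 0 :=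
    Finset.sum_nonneg fun j _ => by split_ifs <;> simp [marginCut_nonneg]
  by_cases ha : a ∈ Ioc 0 (T u)
  swap
  · rw [marginCut, indicator_of_notMem ha]
    exact add_nonneg (marginCut_nonneg _ _) hsum
  rw [marginCut, indicator_of_mem ha]
  have hkR : (0 : ℝ) < k := by exact_mod_cast hk
  rcases le_or_gt u (1 / k) with hu1 | hu1
  · exact (le_marginCut hT ha hu1).trans (le_add_of_nonneg_right hsum)
  -- the layer `j = ⌈k u⌉ - 1` contains `u`
  set j := ⌈k * u⌉₊ - 1
  have hku : 1 < k * u := by rwa [div_lt_iff₀' hkR] at hu1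
  have hceil : 1 < ⌈k * u⌉₊ := Nat.lt_ceil.mpr (by exact_mod_cast hku)
  have hj : j ∈ Finset.Icc 1 (k - 1) :=
    Finset.mem_Icc.mpr ⟨by omega, by have := Nat.ceil_le.mpr (by nlinarith : k * u ≤ k); omega⟩
  have hcast : (j : ℝ) + 1 = ⌈k * u⌉₊ := by
    rw [Nat.cast_sub hceil.le, Nat.cast_one, sub_add_cancel]
  have hlow : (j : ℝ) / k < u := by
    rw [div_lt_iff₀' hkR]
    linarith [Nat.ceil_lt_add_one (by nlinarith : 0 ≤ k * u)]
  have hup : u ≤ ((j : ℝ) + 1) / k := by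
    rw [le_div_iff₀' hkR, hcast]
    exact Nat.le_ceil _
  calc T u ≤ if (j : ℝ) / k < u then marginCut T a ((j + 1) / k) else 0 := by
        rw [if_pos hlow]
        exact le_marginCut hT ha hup
    _ ≤ _ := Finset.single_le_sum (f := fun j : ℕ =>
        if (j : ℝ) / k < u then marginCut T a ((j + 1) / k) else 0)
        (fun j _ => by split_ifs <;> simp [marginCut_nonneg]) hj
    _ ≤ _ := le_add_of_nonneg_left (marginCut_nonneg _ _)

end MarginCut

section ExcessBound

variable {𝒳 : Type*} [MetricSpace 𝒳] [MeasurableSpace 𝒳] {μ : Measure 𝒳} {m : 𝒳 → ℝ}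
  {T : ℝ → ℝ}

/-- Bound on the contribution of `x` to the excess risk of the rule that predicts at `x` the sign
of `m z`. -/
noncomputable def excessBound (μ : Measure 𝒳) (m : 𝒳 → ℝ) (T : ℝ → ℝ) (x z : 𝒳) : ℝ :=
  if 0 < dist x z then marginCut T |m x| (μ.real (closedBall x (dist x z))) else 0

lemma excessBound_nonneg (x z : 𝒳) : 0 ≤ excessBound μ m T x z := by
  unfold excessBound
  split_ifs
  exacts [marginCut_nonneg _ _, le_rfl]

lemma abs_excessBound_le_one (hT : ∀ v, T v ≤ 1) (x z : 𝒳) : |excessBound μ m T x z| ≤ 1 := by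
  rw [abs_of_nonneg (excessBound_nonneg x z)]
  unfold excessBound
  split_ifs
  exacts [marginCut_le_one hT _ _, zero_le_one]

lemma abs_le_excessBound_of_sgn_ne [IsProbabilityMeasure μ] {h : ℝ → ℝ} {x z : 𝒳} (hx : |m x| ≤ 1)
    (hsgn : sgn (m z) ≠ sgn (m x)) (hGL : |m x - m z| ≤ h (μ.real (closedBall x (dist x z)))) :
    |m x| ≤ excessBound μ m (capEnvelope h) x z := by
  have hxz : 0 < dist x z := dist_pos.mpr (by rintro rfl; exact hsgn rfl)
  rcases (abs_nonneg (m x)).eq_or_lt with h0 | hpos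
  · rw [← h0]; exact excessBound_nonneg x z
  have hU : μ.real (closedBall x (dist x z)) ∈ Icc (0 : ℝ) 1 :=
    ⟨measureReal_nonneg, measureReal_le_one⟩
  have hmem : |m x| ∈ Ioc 0 (capEnvelope h (μ.real (closedBall x (dist x z)))) := by
    rw [capEnvelope_of_mem hU]
    exact ⟨hpos, le_min ((abs_le_abs_sub_of_sgn_ne hsgn.symm).trans hGL) hx⟩
  rw [excessBound, if_pos hxz, marginCut, indicator_of_mem hmem]
  exact hmem.2

lemma excessBound_le_layers [IsProbabilityMeasure μ] (hT : Monotone T) {k : ℕ} (hk : 0 < k)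
    (x z : 𝒳) :
    excessBound μ m T x z ≤ marginCut T |m x| (1 / k) + ∑ j ∈ Finset.Icc 1 (k - 1),
      {z | 0 < dist x z ∧ (j : ℝ) / k < μ.real (closedBall x (dist x z))}.indicator
        (fun _ => marginCut T |m x| ((j + 1) / k)) z := by
  unfold excessBound
  split_ifs with hpos
  · refine (marginCut_le_layers hT hk measureReal_le_one).trans_eq ?_
    congr 1
    refine Finset.sum_congr rfl fun j _ => ?_
    simp only [indicator, mem_ofPred_eq, hpos, true_and]
  · exact add_nonneg (marginCut_nonneg _ _) <| Finset.sum_nonneg fun j _ =>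
      indicator_nonneg (fun _ _ => marginCut_nonneg _ _) _

variable [SecondCountableTopology 𝒳] [OpensMeasurableSpace 𝒳]

lemma measurable_measureReal_closedBall [SFinite μ] :
    Measurable fun q : 𝒳 × ℝ => μ.real (closedBall q.1 q.2) := by
  have hS : MeasurableSet {q : (𝒳 × ℝ) × 𝒳 | dist q.2 q.1.1 ≤ q.1.2} :=
    (isClosed_le (by fun_prop) (by fun_prop)).measurableSet
  exact ENNReal.measurable_toReal.comp (measurable_measure_prodMk_left hS)

lemma integrable_excessBound [IsFiniteMeasure μ] (hm : Measurable m) (hT : Measurable T)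
    (hT1 : ∀ v, T v ≤ 1) {α : Type*} [MeasurableSpace α] {ν : Measure α} [IsFiniteMeasure ν]
    {x z : α → 𝒳} (hx : Measurable x) (hz : Measurable z) :
    Integrable (fun a => excessBound μ m T (x a) (z a)) ν := by
  refine Integrable.of_bound ?_ 1 (ae_of_all _ fun a => abs_excessBound_le_one hT1 _ _)
  unfold excessBound
  refine Measurable.aestronglyMeasurable (Measurable.ite ?_ ?_ measurable_const)
  · exact measurableSet_lt measurable_const (hx.dist hz)
  · exact hT.marginCut (hm.comp hx).abs
      (measurable_measureReal_closedBall.comp (hx.prodMk (hx.dist hz)))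

variable [IsProbabilityMeasure μ]

theorem IsRegressionFunction.excess_risk_le_integral_excessBound {lam : Measure (𝒳 × ℝ)}
    [IsProbabilityMeasure lam] (hR : IsRegressionFunction lam μ m) {h : ℝ → ℝ}
    (hh : MonotoneOn h (Icc 0 1))
    (hGL : ∀ x z, |m x - m z| ≤ h (μ.real (closedBall x (dist x z)))) {z : 𝒳 → 𝒳}
    (hz : Measurable z) :
    lam.real {p | sgn (m (z p.1)) ≠ p.2} - lam.real {p | sgn (m p.1) ≠ p.2}
      ≤ ∫ x, excessBound μ m (capEnvelope h) x (z x) ∂μ := by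
  have hs : Measurable fun x => sgn (m (z x)) := measurable_sgn.comp (hR.measurable.comp hz)
  have hD : MeasurableSet {x | sgn (m (z x)) ≠ sgn (m x)} :=
    (measurableSet_eq_fun hs (measurable_sgn.comp hR.measurable)).compl
  rw [hR.excess_risk_eq hs fun x => sgn_eq_one_or_eq_neg_one _, ← integral_indicator hD]
  refine integral_mono_ae (hR.integrable.abs.indicator hD)
    (integrable_excessBound hR.measurable (monotone_capEnvelope hh).measurable capEnvelope_le_one
      measurable_id hz) ?_
  filter_upwards [hR.ae_abs_le_one] with x hx
  by_cases hxD : x ∈ {x | sgn (m (z x)) ≠ sgn (m x)}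
  · rw [indicator_of_mem hxD]
    exact abs_le_excessBound_of_sgn_ne hx hxD (hGL x (z x))
  · rw [indicator_of_notMem hxD]
    exact excessBound_nonneg x (z x)

end ExcessBound

section Prototypes

variable {𝒳 : Type*} [MetricSpace 𝒳] [MeasurableSpace 𝒳] {μ : Measure 𝒳}
  [IsProbabilityMeasure μ]

lemma exists_radius_lt_of_lt_measureReal_closedBall {x : 𝒳}
    (hH : ContinuousOn (fun r => μ.real (closedBall x r)) (Ici 0)) {u : ℝ} (hu : u < 1) :
    ∃ r, u ≤ μ.real (closedBall x r) ∧ ∀ s, 0 < s → u < μ.real (closedBall x s) → r < s := by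
  rcases le_or_gt u (μ.real (closedBall x 0)) with h0 | h0
  · exact ⟨0, h0, fun s hs _ => hs⟩
  obtain ⟨n, hn⟩ : ∃ n : ℕ, u < μ.real (closedBall x n) := by
    have hmono : Monotone fun n : ℕ => closedBall x n := fun a b hab =>
      closedBall_subset_closedBall (by exact_mod_cast hab)
    have hlim := tendsto_measure_iUnion_atTop (μ := μ) hmono
    rw [iUnion_closedBall_nat, measure_univ] at hlim
    exact (((ENNReal.tendsto_toReal ENNReal.one_ne_top).comp hlim).eventually
      (lt_mem_nhds (by simpa using hu))).exists
  obtain ⟨r, -, hr⟩ := intermediate_value_Icc (Nat.cast_nonneg n)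
    (hH.mono Icc_subset_Ici_self) ⟨h0.le, hn.le⟩
  refine ⟨r, hr.ge, fun s _ hs => ?_⟩
  by_contra! hsr
  exact (hs.trans_le (hr ▸ measureReal_mono (closedBall_subset_closedBall hsr))).false

variable [OpensMeasurableSpace 𝒳] {Ω : Type*} [MeasurableSpace Ω] {P : Measure Ω} {k : ℕ}
  {proto : Fin k → Ω → 𝒳}

lemma measureReal_iInter_preimage_compl_closedBall (hpmeas : ∀ j, Measurable (proto j))
    (hplaw : ∀ j, P.map (proto j) = μ) (hindep : iIndepFun proto P) (x : 𝒳) (r : ℝ) :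
    P.real (⋂ i, proto i ⁻¹' (closedBall x r)ᶜ) = (1 - μ.real (closedBall x r)) ^ k := by
  have hball : MeasurableSet (closedBall x r)ᶜ := isClosed_closedBall.measurableSet.compl
  have hprod := hindep.measure_inter_preimage_eq_mul Finset.univ
    (sets := fun _ => (closedBall x r)ᶜ) fun _ _ => hball
  simp only [Finset.mem_univ, iInter_true] at hprod
  rw [measureReal_def, hprod, ENNReal.toReal_prod]
  simp_rw [← measureReal_def, ← map_measureReal_apply (hpmeas _) hball, hplaw,
    probReal_compl_eq_one_sub isClosed_closedBall.measurableSet]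
  simp

lemma measureReal_nearestProto_mass_gt_le [IsProbabilityMeasure P] (hk : 0 < k)
    (hpmeas : ∀ j, Measurable (proto j)) (hplaw : ∀ j, P.map (proto j) = μ)
    (hindep : iIndepFun proto P) {x : 𝒳}
    (hH : ContinuousOn (fun r => μ.real (closedBall x r)) (Ici 0)) {u : ℝ} (hu : u < 1) :
    P.real {ω | 0 < dist x (nearestProto hk (fun j => proto j ω) x) ∧
      u < μ.real (closedBall x (dist x (nearestProto hk (fun j => proto j ω) x)))}
      ≤ (1 - u) ^ k := by
  obtain ⟨r, hru, hr⟩ := exists_radius_lt_of_lt_measureReal_closedBall hH hu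
  calc _ ≤ P.real (⋂ i, proto i ⁻¹' (closedBall x r)ᶜ) := by
        refine measureReal_mono fun ω ⟨hpos, hmass⟩ => mem_iInter.mpr fun i => ?_
        simpa [dist_comm] using (hr _ hpos hmass).trans_le
          (dist_nearestProto_le hk (fun j => proto j ω) x i)
    _ = (1 - μ.real (closedBall x r)) ^ k :=
        measureReal_iInter_preimage_compl_closedBall hpmeas hplaw hindep x r
    _ ≤ (1 - u) ^ k := by
      have : μ.real (closedBall x r) ≤ 1 := measureReal_le_one
      gcongr

variable [SecondCountableTopology 𝒳] [IsProbabilityMeasure P]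

lemma integral_excessBound_nearestProto_le (hk : 0 < k) (hpmeas : ∀ j, Measurable (proto j))
    (hplaw : ∀ j, P.map (proto j) = μ) (hindep : iIndepFun proto P) {x : 𝒳}
    (hH : ContinuousOn (fun r => μ.real (closedBall x r)) (Ici 0)) {m : 𝒳 → ℝ} {T : ℝ → ℝ}
    (hT : Monotone T) :
    ∫ ω, excessBound μ m T x (nearestProto hk (fun j => proto j ω) x) ∂P
      ≤ marginCut T |m x| (1 / k) + ∑ j ∈ Finset.Icc 1 (k - 1),
          (1 - (j : ℝ) / k) ^ k * marginCut T |m x| ((j + 1) / k) := by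
  set Z := fun ω => nearestProto hk (fun j => proto j ω) x
  have hd : Measurable fun ω => dist x (Z ω) :=
    measurable_const.dist (measurable_nearestProto hk hpmeas measurable_const)
  set A : ℕ → Set Ω := fun j =>
    {ω | 0 < dist x (Z ω) ∧ (j : ℝ) / k < μ.real (closedBall x (dist x (Z ω)))}
  have hA : ∀ j, MeasurableSet (A j) := fun j =>
    (measurableSet_lt measurable_const hd).inter (measurableSet_lt measurable_const
      (measurable_measureReal_closedBall.comp (measurable_const.prodMk hd)))
  have hint : ∀ j : ℕ, Integrable ((A j).indicator fun _ => marginCut T |m x| ((j + 1) / k)) P :=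
    fun j => (integrable_const _).indicator (hA j)
  calc _ ≤ ∫ ω, marginCut T |m x| (1 / k) + ∑ j ∈ Finset.Icc 1 (k - 1),
          (A j).indicator (fun _ => marginCut T |m x| ((j + 1) / k)) ω ∂P :=
        integral_mono_of_nonneg (ae_of_all _ fun ω => excessBound_nonneg x (Z ω))
          ((integrable_const _).add (integrable_finsetSum _ fun j _ => hint j))
          (ae_of_all _ fun ω => excessBound_le_layers hT hk x (Z ω))
    _ = marginCut T |m x| (1 / k) +
        ∑ j ∈ Finset.Icc 1 (k - 1), P.real (A j) * marginCut T |m x| ((j + 1) / k) := by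
      rw [integral_add (integrable_const _) (integrable_finsetSum _ fun j _ => hint j),
        integral_const, integral_finsetSum _ fun j _ => hint j]
      simp [integral_indicator_const _ (hA _)]
    _ ≤ _ := by
      gcongr with j hj
      · exact marginCut_nonneg _ _
      have hjk : (j : ℝ) / k < 1 := by
        rw [div_lt_one (by exact_mod_cast hk)]
        exact_mod_cast (Finset.mem_Icc.mp hj).2.trans_lt (Nat.sub_lt hk one_pos)
      exact measureReal_nearestProto_mass_gt_le hk hpmeas hplaw hindep hH hjk

end Prototypes

lemma ConcaveOn.mul_le_apply_mul {f : ℝ → ℝ} (hf : ConcaveOn ℝ (Icc 0 1) f) (hf0 : 0 ≤ f 0)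
    {b θ : ℝ} (hb : b ∈ Icc (0 : ℝ) 1) (hθ : θ ∈ Icc (0 : ℝ) 1) : θ * f b ≤ f (θ * b) := by
  have h := hf.2 (left_mem_Icc.mpr zero_le_one) hb (sub_nonneg.mpr hθ.2) hθ.1 (sub_add_cancel 1 θ)
  simp only [smul_eq_mul, mul_zero, zero_add] at h
  nlinarith [mul_nonneg (sub_nonneg.mpr hθ.2) hf0]

lemma capEnvelope_rpow_le {h : ℝ → ℝ} {γ : ℝ} (hγ : 0 ≤ 1 + γ)
    (hh : ∀ s ∈ Icc (0 : ℝ) 1, 0 ≤ h s) (hconc : ConcaveOn ℝ (Icc 0 1) fun s => h s ^ (1 + γ))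
    {n k : ℕ} (hn : 1 ≤ n) (hnk : n ≤ k) :
    capEnvelope h (n / k) ^ (1 + γ) ≤ n * h (k : ℝ)⁻¹ ^ (1 + γ) := by
  have hkR : (0 : ℝ) < k := by exact_mod_cast hn.trans hnk
  have hnR : (1 : ℝ) ≤ n := by exact_mod_cast hn
  have hb : (n : ℝ) / k ∈ Icc (0 : ℝ) 1 :=
    ⟨by positivity, (div_le_one hkR).mpr (by exact_mod_cast hnk)⟩
  have hθ : (n : ℝ)⁻¹ ∈ Icc (0 : ℝ) 1 := ⟨by positivity, inv_le_one_of_one_le₀ hnR⟩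
  have hconc' := hconc.mul_le_apply_mul (Real.rpow_nonneg (hh 0 (left_mem_Icc.mpr zero_le_one)) _)
    hb hθ
  rw [show (n : ℝ)⁻¹ * (n / k) = (k : ℝ)⁻¹ by field_simp] at hconc'
  calc capEnvelope h (n / k) ^ (1 + γ) ≤ h (n / k) ^ (1 + γ) := by
        rw [capEnvelope_of_mem hb]
        exact Real.rpow_le_rpow (le_min (hh _ hb) zero_le_one) (min_le_left _ _) hγ
    _ ≤ n * h (k : ℝ)⁻¹ ^ (1 + γ) := by
        rwa [inv_mul_le_iff₀ (by positivity)] at hconc'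

lemma integrable_marginCut_abs {𝒳 : Type*} [MeasurableSpace 𝒳] {μ : Measure 𝒳}
    [IsFiniteMeasure μ] {m : 𝒳 → ℝ} (hm : Measurable m) (T : ℝ → ℝ) (v : ℝ) :
    Integrable (fun x => marginCut T |m x| v) μ :=
  (integrable_const (T v)).indicator (s := {x | 0 < |m x| ∧ |m x| ≤ T v})
    ((measurableSet_lt measurable_const hm.abs).inter (measurableSet_le hm.abs measurable_const))

lemma integral_marginCut_le {𝒳 : Type*} [MeasurableSpace 𝒳] {μ : Measure 𝒳} [IsFiniteMeasure μ]
    {m : 𝒳 → ℝ} (hm : Measurable m) {γ cstar : ℝ} (hcstar : 0 ≤ cstar)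
    (hmargin : ∀ t : ℝ, 0 < t → t ≤ 1 → μ.real {x | 0 < |m x| ∧ |m x| ≤ t} ≤ cstar * t ^ γ)
    {T : ℝ → ℝ} {v : ℝ} (hTv0 : 0 ≤ T v) (hTv : T v ≤ 1) :
    ∫ x, marginCut T |m x| v ∂μ ≤ cstar * T v ^ (1 + γ) := by
  have hS : MeasurableSet {x | 0 < |m x| ∧ |m x| ≤ T v} :=
    (measurableSet_lt measurable_const hm.abs).inter (measurableSet_le hm.abs measurable_const)
  rw [show (fun x => marginCut T |m x| v) = {x | 0 < |m x| ∧ |m x| ≤ T v}.indicator fun _ => T v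
    from rfl, integral_indicator_const _ hS, smul_eq_mul]
  rcases hTv0.eq_or_lt with hT0 | hT0
  · have hempty : {x | 0 < |m x| ∧ |m x| ≤ T v} = ∅ :=
      eq_empty_of_forall_notMem fun x hx => (hx.1.trans_le hx.2).ne hT0
    rw [hempty, measureReal_empty, zero_mul]
    exact mul_nonneg hcstar (Real.rpow_nonneg hTv0 _)
  calc μ.real {x | 0 < |m x| ∧ |m x| ≤ T v} * T v ≤ cstar * T v ^ γ * T v :=
        mul_le_mul_of_nonneg_right (hmargin _ hT0 hTv) hT0.le
    _ = cstar * T v ^ (1 + γ) := by rw [Real.rpow_add hT0, Real.rpow_one]; ring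

lemma sum_one_sub_div_pow_mul_le (k : ℕ) :
    ∑ j ∈ Finset.Icc 1 (k - 1), (1 - (j : ℝ) / k) ^ k * (j + 1) ≤ 4 := by
  have hexp : Real.exp (-1) ≤ 3 / 8 := by
    rw [Real.exp_neg, inv_le_comm₀ (Real.exp_pos 1) (by norm_num)]
    linarith [Real.exp_one_gt_d9]
  have hterm : ∀ j ∈ Finset.Icc 1 (k - 1), (1 - (j : ℝ) / k) ^ k * (j + 1) ≤ (3 / 4) ^ j := by
    intro j hj
    have hjk : (j : ℝ) ≤ k := by exact_mod_cast (Finset.mem_Icc.mp hj).2.trans (Nat.sub_le k 1)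
    calc (1 - (j : ℝ) / k) ^ k * (j + 1) ≤ Real.exp (-1) ^ j * 2 ^ j := by
          rw [← Real.exp_nat_mul, mul_neg_one]
          gcongr
          · exact Real.one_sub_div_pow_le_exp_neg hjk
          · exact_mod_cast Nat.lt_two_pow_self
      _ ≤ (3 / 8) ^ j * 2 ^ j := by gcongr
      _ = (3 / 4) ^ j := by rw [← mul_pow]; norm_num
  calc _ ≤ ∑ j ∈ Finset.Icc 1 (k - 1), (3 / 4 : ℝ) ^ j := Finset.sum_le_sum hterm
    _ ≤ ∑' j : ℕ, (3 / 4 : ℝ) ^ j :=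
        (summable_geometric_of_lt_one (by norm_num) (by norm_num)).sum_le_tsum _
          fun _ _ => by positivity
    _ = 4 := by rw [tsum_geometric_of_lt_one (by norm_num) (by norm_num)]; norm_num

lemma integral_marginCut_layers_le {𝒳 : Type*} [MeasurableSpace 𝒳] {μ : Measure 𝒳}
    [IsFiniteMeasure μ] {m : 𝒳 → ℝ} (hm : Measurable m) {γ cstar : ℝ} (hγ : 0 ≤ 1 + γ)
    (hcstar : 0 ≤ cstar)
    (hmargin : ∀ t : ℝ, 0 < t → t ≤ 1 → μ.real {x | 0 < |m x| ∧ |m x| ≤ t} ≤ cstar * t ^ γ)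
    {h : ℝ → ℝ} (hh : ∀ s ∈ Icc (0 : ℝ) 1, 0 ≤ h s)
    (hconc : ConcaveOn ℝ (Icc 0 1) fun s => h s ^ (1 + γ)) {k : ℕ} (hk : 0 < k) :
    ∫ x, (marginCut (capEnvelope h) |m x| (1 / k) + ∑ j ∈ Finset.Icc 1 (k - 1),
        (1 - (j : ℝ) / k) ^ k * marginCut (capEnvelope h) |m x| ((j + 1) / k)) ∂μ
      ≤ 5 * cstar * h (k : ℝ)⁻¹ ^ (1 + γ) := by
  set T := capEnvelope h
  set H := h (k : ℝ)⁻¹ ^ (1 + γ)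
  have hH : 0 ≤ H :=
    Real.rpow_nonneg (hh _ ⟨by positivity, inv_le_one_of_one_le₀ (by exact_mod_cast hk)⟩) _
  have hint := integrable_marginCut_abs (μ := μ) hm T
  have hle : ∀ n : ℕ, 1 ≤ n → n ≤ k → ∫ x, marginCut T |m x| (n / k) ∂μ ≤ cstar * (n * H) :=
    fun n hn hnk => (integral_marginCut_le hm hcstar hmargin (capEnvelope_nonneg hh _)
      (capEnvelope_le_one _)).trans
      (mul_le_mul_of_nonneg_left (capEnvelope_rpow_le hγ hh hconc hn hnk) hcstar)
  rw [integral_add (hint _) (integrable_finsetSum _ fun j _ => (hint _).const_mul _),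
    integral_finsetSum _ fun j _ => (hint _).const_mul _]
  simp_rw [integral_const_mul]
  calc _ ≤ cstar * (1 * H) + ∑ j ∈ Finset.Icc 1 (k - 1),
        (1 - (j : ℝ) / k) ^ k * (cstar * ((j + 1) * H)) := by
        refine add_le_add (by simpa using hle 1 le_rfl hk) (Finset.sum_le_sum fun j hj => ?_)
        obtain ⟨hj1, hjk⟩ := Finset.mem_Icc.mp hj
        have hjkR : (j : ℝ) ≤ k := by exact_mod_cast hjk.trans (Nat.sub_le k 1)
        have hjk' : (j : ℝ) / k ≤ 1 := div_le_one_of_le₀ hjkR (Nat.cast_nonneg k)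
        exact mul_le_mul_of_nonneg_left (by simpa using hle (j + 1) (by omega) (by omega))
          (pow_nonneg (by linarith) k)
    _ = cstar * H * (1 + ∑ j ∈ Finset.Icc 1 (k - 1), (1 - (j : ℝ) / k) ^ k * (j + 1)) := by
        rw [mul_add, Finset.mul_sum, one_mul, mul_one]
        congr 1
        exact Finset.sum_congr rfl fun j _ => by ring
    _ ≤ cstar * H * 5 := by
        gcongr
        linarith [sum_one_sub_div_pow_mul_le k]
    _ = 5 * cstar * H := by ring

theorem IsRegressionFunction.integral_excess_risk_nearestProto_le {𝒳 : Type*} [MetricSpace 𝒳]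
    [MeasurableSpace 𝒳] [OpensMeasurableSpace 𝒳] [SecondCountableTopology 𝒳]
    {lam : Measure (𝒳 × ℝ)} [IsProbabilityMeasure lam] {μ : Measure 𝒳} {m : 𝒳 → ℝ}
    (hR : IsRegressionFunction lam μ m) {h : ℝ → ℝ} (hh : MonotoneOn h (Icc 0 1))
    (hGL : ∀ x z, |m x - m z| ≤ h (μ.real (closedBall x (dist x z))))
    {Ω : Type*} [MeasurableSpace Ω] {P : Measure Ω} [IsProbabilityMeasure P] {k : ℕ}
    (hk : 0 < k) {proto : Fin k → Ω → 𝒳} (hpmeas : ∀ j, Measurable (proto j)) :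
    ∫ ω, lam.real {p | sgn (m (nearestProto hk (fun j => proto j ω) p.1)) ≠ p.2} ∂P
        - lam.real {p | sgn (m p.1) ≠ p.2}
      ≤ ∫ x, ∫ ω, excessBound μ m (capEnvelope h) x
          (nearestProto hk (fun j => proto j ω) x) ∂P ∂μ := by
  have := hR.isProbabilityMeasure
  set B : Ω × 𝒳 → ℝ := fun q =>
    excessBound μ m (capEnvelope h) q.2 (nearestProto hk (fun j => proto j q.1) q.2)
  have hB : Integrable B (P.prod μ) :=
    integrable_excessBound hR.measurable (monotone_capEnvelope hh).measurable capEnvelope_le_one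
      measurable_snd (measurable_nearestProto hk (fun j => (hpmeas j).comp measurable_fst)
        measurable_snd)
  have hint : Integrable (fun ω => lam.real {p | sgn (m p.1) ≠ p.2} + ∫ x, B (ω, x) ∂μ) P :=
    (integrable_const _).add hB.integral_prod_left
  have hexcess := integral_mono_of_nonneg (ae_of_all _ fun ω => measureReal_nonneg) hint
    (ae_of_all _ fun ω => sub_le_iff_le_add'.mp <| hR.excess_risk_le_integral_excessBound hh hGL
      (measurable_nearestProto hk (fun j => measurable_const (a := proto j ω)) measurable_id))
  rw [integral_add (integrable_const _) hB.integral_prod_left, integral_const, probReal_univ,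
    one_smul] at hexcess
  rw [← integral_integral_swap (f := fun ω x => B (ω, x)) hB]
  linarith

/-- Under continuity of the `H_x`, the generalized Lipschitz condition with
`h^{1+γ}` concave and the margin condition with exponent `γ > 0` and constant `c* ≥ 0`, the
1-NN rule based on `k` i.i.d. prototypes, `g_NN(x) = sign m(X'_{k,1}(x))`, satisfies
`E[L(g_NN)] − L* ≤ C·h(1/k)^{1+γ}` with `C` depending only on `c*` and `γ`. -/
theorem proto_nn_approximation_error
    (γ cstar : ℝ) (hγ : 0 < γ) (hcstar : 0 ≤ cstar) :
    ∃ C : ℝ, 0 < C ∧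
    ∀ (𝒳 : Type) [MetricSpace 𝒳] [TopologicalSpace.SeparableSpace 𝒳]
      [MeasurableSpace 𝒳] [BorelSpace 𝒳]
      (lam : Measure (𝒳 × ℝ)) (_ : IsProbabilityMeasure lam)
      (μ : Measure 𝒳) (_hμ : μ = lam.map Prod.fst)
      (m : 𝒳 → ℝ) (_hm_meas : Measurable m)
      (_hY : lam {p | p.2 = 1 ∨ p.2 = -1} = 1)
      -- `m` is the regression function `m(x) = E[Y | X = x]`
      (_hreg : ∀ A : Set 𝒳, MeasurableSet A →
        ∫ p in {q : 𝒳 × ℝ | q.1 ∈ A}, p.2 ∂lam = ∫ x in A, m x ∂μ)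
      -- the distribution function `H_x` is continuous for each `x`
      (_hH : ∀ x : 𝒳, ContinuousOn (fun r : ℝ => (μ (Metric.closedBall x r)).toReal) (Ici 0))
      -- generalized Lipschitz condition
      (h : ℝ → ℝ) (_hmono : MonotoneOn h (Icc 0 1))
      (_hnonneg : ∀ s ∈ Icc (0 : ℝ) 1, 0 ≤ h s)
      (_hlim : Tendsto h (nhdsWithin 0 (Ioi 0)) (nhds 0))
      (_hconc : ConcaveOn ℝ (Icc (0 : ℝ) 1) (fun s => h s ^ (1 + γ)))
      (_hGL : ∀ x z : 𝒳, |m x - m z| ≤ h ((μ (Metric.closedBall x (dist x z))).toReal))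
      -- margin condition
      (_hmargin : ∀ t : ℝ, 0 < t → t ≤ 1 →
        (μ {x | 0 < |m x| ∧ |m x| ≤ t}).toReal ≤ cstar * t ^ γ)
      -- prototypes
      (k : ℕ) (hk : 0 < k)
      (Ω : Type) (_ : MeasurableSpace Ω) (P : Measure Ω) (_ : IsProbabilityMeasure P)
      (proto : Fin k → Ω → 𝒳) (_hpmeas : ∀ j, Measurable (proto j))
      (_hplaw : ∀ j, P.map (proto j) = μ)
      (_hindep : ProbabilityTheory.iIndepFun proto P),
      (∫ ω, (lam {p : 𝒳 × ℝ |
          sgn (m (proto (nearestIdx hk (fun j => proto j ω) p.1) ω)) ≠ p.2}).toReal ∂P)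
        - (lam {p : 𝒳 × ℝ | sgn (m p.1) ≠ p.2}).toReal
      ≤ C * h ((k : ℝ)⁻¹) ^ (1 + γ) := by
  refine ⟨5 * cstar + 1, by linarith, ?_⟩
  intro 𝒳 _ _ _ _ lam _ μ hμ m hm hY hreg hH h hmono hnonneg _ hconc hGL hmargin k hk Ω _ P _
    proto hpmeas hplaw hindep
  have := UniformSpace.secondCountable_of_separable 𝒳
  have hlabel : ∀ᵐ p ∂lam, p.2 = 1 ∨ p.2 = -1 := by
    refine (ae_iff_measure_eq ?_).mpr (by rw [hY, measure_univ])
    exact ((measurableSet_eq_fun measurable_snd measurable_const).union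
      (measurableSet_eq_fun measurable_snd measurable_const)).nullMeasurableSet
  have hR : IsRegressionFunction lam μ m := ⟨hμ, hm, hlabel, hreg⟩
  have := hR.isProbabilityMeasure
  have hH0 : 0 ≤ h (k : ℝ)⁻¹ ^ (1 + γ) :=
    Real.rpow_nonneg (hnonneg _ ⟨by positivity, inv_le_one_of_one_le₀ (by exact_mod_cast hk)⟩) _
  calc _ ≤ ∫ x, ∫ ω, excessBound μ m (capEnvelope h) x
          (nearestProto hk (fun j => proto j ω) x) ∂P ∂μ :=
        hR.integral_excess_risk_nearestProto_le hmono hGL hk hpmeas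
    _ ≤ ∫ x, (marginCut (capEnvelope h) |m x| (1 / k) + ∑ j ∈ Finset.Icc 1 (k - 1),
          (1 - (j : ℝ) / k) ^ k * marginCut (capEnvelope h) |m x| ((j + 1) / k)) ∂μ :=
        integral_mono_of_nonneg
          (ae_of_all _ fun x => integral_nonneg fun ω => excessBound_nonneg _ _)
          ((integrable_marginCut_abs hm _ _).add (integrable_finsetSum _ fun j _ =>
            (integrable_marginCut_abs hm _ _).const_mul _))
          (ae_of_all _ fun x => integral_excessBound_nearestProto_le hk hpmeas hplaw hindep (hH x)
            (monotone_capEnvelope hmono))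
    _ ≤ 5 * cstar * h (k : ℝ)⁻¹ ^ (1 + γ) :=
        integral_marginCut_layers_le hm (by linarith) hcstar hmargin hnonneg hconc hk
    _ ≤ (5 * cstar + 1) * h (k : ℝ)⁻¹ ^ (1 + γ) := by nlinarith
end

section
/- Let (X_1, Y_1), …, (X_n, Y_n) be i.i.d. copies of a random pair (X, Y), where X takes values in a measurable space 𝒳 with distribution μ and Y takes values in {−1, +1}, and let A_1, …, A_k be pairwise disjoint measurable subsets of 𝒳. With ν(A) = E[Y·1{X ∈ A}] and ν_n(A) = (1/n) Σ_{i=1}^n Y_i·1{X_i ∈ A}, one has Σ_{j=1}^k P(|ν_n(A_j) − ν(A_j)| ≥ |ν(A_j)|)·|ν(A_j)| ≤ (1/√n) Σ_{j=1}^k √(μ(A_j)) ≤ √(k/n). -/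
open MeasureTheory Set

/-!
Fix a cell `A` and put `g(x, y) = y · 1_A(x)`, so that `ν_n(A)` is the empirical mean of
`g` over the sample and `ν(A)` its expectation. Since `y² = 1` almost surely,
`Var g ≤ E g² = μ(A)`, so the empirical mean has variance at most `μ(A)/n`. For any random
variable `f` and any `c ≥ 0`, Chebyshev's inequality gives
`P(|f - E f| ≥ c) · c ≤ min (c, Var f / c) ≤ √(Var f)`; with `c = |ν(A)|` this bounds the
`A`-term by `√(μ(A)/n)`. Summing over the cells, Cauchy–Schwarz and `Σ_j μ(A_j) ≤ 1` give
`Σ_j √(μ(A_j)) ≤ √k`.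
-/

open ProbabilityTheory Function

lemma measureReal_abs_sub_integral_ge_mul_le_sqrt_variance {Ω : Type*} [MeasurableSpace Ω]
    {P : Measure Ω} [IsProbabilityMeasure P] {f : Ω → ℝ} (hf : MemLp f 2 P) {c : ℝ}
    (hc : 0 ≤ c) :
    P.real {ω | c ≤ |f ω - P[f]|} * c ≤ √(variance f P) := by
  set V := variance f P
  have hV : 0 ≤ V := variance_nonneg f P
  rcases le_or_gt c √V with hcV | hcV
  · calc _ ≤ 1 * c := mul_le_mul_of_nonneg_right measureReal_le_one hc
      _ ≤ √V := by rwa [one_mul]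
  have hc0 : 0 < c := (Real.sqrt_nonneg V).trans_lt hcV
  have hcheb : P.real {ω | c ≤ |f ω - P[f]|} ≤ V / c ^ 2 :=
    ENNReal.toReal_le_of_le_ofReal (by positivity)
      (meas_ge_le_variance_div_sq hf hc0)
  calc _ ≤ V / c ^ 2 * c := mul_le_mul_of_nonneg_right hcheb hc
    _ = √V * (√V / c) := by
        rw [← mul_div_assoc, Real.mul_self_sqrt hV]; field_simp
    _ ≤ √V * 1 := by gcongr; exact div_le_one_of_le₀ hcV.le hc
    _ = √V := mul_one _

section EmpiricalMean

variable {Ω E : Type*} [MeasurableSpace Ω] [MeasurableSpace E] {P : Measure Ω} {lam : Measure E}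
  {n : ℕ} {W : Fin n → Ω → E} {g : E → ℝ}

noncomputable def empiricalMean (g : E → ℝ) (W : Fin n → Ω → E) : Ω → ℝ :=
  fun ω => (n : ℝ)⁻¹ * ∑ i, g (W i ω)

lemma aemeasurable_of_map_eq [NeZero lam] {X : Ω → E} (hX : P.map X = lam) : AEMeasurable X P :=
  .of_map_ne_zero (hX ▸ NeZero.ne lam)

lemma memLp_comp_of_map_eq [NeZero lam] {X : Ω → E} (hX : P.map X = lam) (hg : MemLp g 2 lam) :
    MemLp (fun ω => g (X ω)) 2 P :=
  (hX ▸ hg).comp_of_map (aemeasurable_of_map_eq hX)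

variable [IsProbabilityMeasure lam]

lemma integral_empiricalMean [IsProbabilityMeasure P] (hn : 0 < n) (hW : ∀ i, P.map (W i) = lam)
    (hg : MemLp g 2 lam) :
    P[empiricalMean g W] = ∫ x, g x ∂lam := by
  have hmean : ∀ i, ∫ ω, g (W i ω) ∂P = ∫ x, g x ∂lam := fun i => by
    rw [← hW i, integral_map (aemeasurable_of_map_eq (hW i)) ((hW i).symm ▸ hg.1)]
  simp only [empiricalMean]
  rw [integral_const_mul,
    integral_finsetSum _ fun i _ => (memLp_comp_of_map_eq (hW i) hg).integrable one_le_two]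
  simp only [hmean, Finset.sum_const, Finset.card_univ, Fintype.card_fin, nsmul_eq_mul]
  field_simp

lemma variance_empiricalMean [IsProbabilityMeasure P] (hW : ∀ i, P.map (W i) = lam)
    (hindep : iIndepFun W P) (hg : MemLp g 2 lam) :
    variance (empiricalMean g W) P = variance g lam / n := by
  have hvar : ∀ i, variance (fun ω => g (W i ω)) P = variance g lam := fun i => by
    rw [← hW i] at hg ⊢
    exact (variance_map hg.1.aemeasurable (aemeasurable_of_map_eq (hW i))).symm
  have hindep' : iIndepFun (fun i ω => g (W i ω)) P :=
    hindep.comp₀ (fun _ => g) (fun i => aemeasurable_of_map_eq (hW i))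
      (fun i => (hW i).symm ▸ hg.1.aemeasurable)
  have hsum : variance (∑ i, fun ω => g (W i ω)) P = n * variance g lam := by
    rw [IndepFun.variance_sum (fun i _ => memLp_comp_of_map_eq (hW i) hg)
      (fun i _ j _ hij => hindep'.indepFun hij)]
    simp [hvar]
  have hmean : empiricalMean g W = fun ω => (n : ℝ)⁻¹ * (∑ i, fun ω => g (W i ω)) ω := by
    ext ω; simp [empiricalMean]
  rw [hmean, variance_const_mul, hsum]
  field_simp

lemma measureReal_abs_empiricalMean_sub_ge_mul_le [IsProbabilityMeasure P] (hn : 0 < n)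
    (hW : ∀ i, P.map (W i) = lam) (hindep : iIndepFun W P) (hg : MemLp g 2 lam) {c : ℝ}
    (hc : 0 ≤ c) :
    P.real {ω | c ≤ |empiricalMean g W ω - ∫ x, g x ∂lam|} * c ≤ √(variance g lam / n) := by
  have hf : MemLp (empiricalMean g W) 2 P := by
    have := (memLp_finsetSum' Finset.univ fun i _ => memLp_comp_of_map_eq (hW i) hg).const_mul
      (n : ℝ)⁻¹
    convert this using 2 with ω
    simp [empiricalMean]
  have := measureReal_abs_sub_integral_ge_mul_le_sqrt_variance hf hc
  rwa [integral_empiricalMean hn hW hg, variance_empiricalMean hW hindep hg] at this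

end EmpiricalMean

section SignedIndicator

variable {𝒳 : Type*} {A : Set 𝒳}

noncomputable def signedIndicator (A : Set 𝒳) (p : 𝒳 × ℝ) : ℝ :=
  p.2 * A.indicator (fun _ => 1) p.1

lemma signedIndicator_eq_indicator (A : Set 𝒳) :
    signedIndicator A = (Prod.fst ⁻¹' A).indicator Prod.snd := by
  ext p
  by_cases hp : p.1 ∈ A <;> simp [signedIndicator, hp]

lemma abs_signedIndicator_le_one {p : 𝒳 × ℝ} (hp : p.2 = 1 ∨ p.2 = -1) :
    |signedIndicator A p| ≤ 1 := by
  rw [signedIndicator_eq_indicator, indicator, abs_le]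
  split_ifs <;> rcases hp with h | h <;> simp [h]

variable [MeasurableSpace 𝒳] {lam : Measure (𝒳 × ℝ)}

lemma memLp_signedIndicator [IsFiniteMeasure lam] (hA : MeasurableSet A)
    (hY : ∀ᵐ p ∂lam, p.2 = 1 ∨ p.2 = -1) : MemLp (signedIndicator A) 2 lam := by
  refine MemLp.of_bound ?_ 1 (hY.mono fun p hp => abs_signedIndicator_le_one hp)
  rw [signedIndicator_eq_indicator]
  exact (measurable_snd.indicator (measurable_fst hA)).aestronglyMeasurable

lemma integral_signedIndicator (hA : MeasurableSet A) :
    ∫ p, signedIndicator A p ∂lam = ∫ p in {q : 𝒳 × ℝ | q.1 ∈ A}, p.2 ∂lam := by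
  rw [signedIndicator_eq_indicator, integral_indicator (measurable_fst hA)]
  rfl

lemma variance_signedIndicator_le [IsProbabilityMeasure lam] (hA : MeasurableSet A)
    (hY : ∀ᵐ p ∂lam, p.2 = 1 ∨ p.2 = -1) :
    variance (signedIndicator A) lam ≤ (lam.map Prod.fst).real A := by
  have hsq : signedIndicator A ^ 2 =ᵐ[lam] (Prod.fst ⁻¹' A).indicator 1 := by
    filter_upwards [hY] with p hp
    rw [signedIndicator_eq_indicator]
    by_cases hpA : p.1 ∈ A <;> rcases hp with h | h <;> simp [hpA, h]
  calc variance (signedIndicator A) lam ≤ lam[signedIndicator A ^ 2] :=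
        variance_le_expectation_sq (memLp_signedIndicator hA hY).1
    _ = (lam.map Prod.fst).real A := by
        rw [integral_congr_ae hsq,
          integral_indicator_one (measurable_fst hA),
          map_measureReal_apply measurable_fst hA]

end SignedIndicator

lemma sum_sqrt_measureReal_le_sqrt_card {α ι : Type*} [MeasurableSpace α] [Fintype ι]
    {μ : Measure α} [IsProbabilityMeasure μ] {A : ι → Set α} (hA : ∀ j, MeasurableSet (A j))
    (hdisj : Pairwise (Disjoint on A)) :
    ∑ j, √(μ.real (A j)) ≤ √(Fintype.card ι) := by
  have hsum : ∑ j, μ.real (A j) ≤ 1 :=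
    (measureReal_iUnion_fintype hdisj hA).symm.trans_le measureReal_le_one
  calc ∑ j, √(μ.real (A j)) = ∑ j : ι, √1 * √(μ.real (A j)) := by simp
    _ ≤ √(∑ _j : ι, 1) * √(∑ j, μ.real (A j)) :=
        Real.sum_sqrt_mul_sqrt_le _ (fun _ => zero_le_one) (fun _ => measureReal_nonneg)
    _ ≤ √(Fintype.card ι) * √1 := by
        simp only [Finset.sum_const, Finset.card_univ, nsmul_eq_mul, mul_one]
        gcongr
    _ = √(Fintype.card ι) := by rw [Real.sqrt_one, mul_one]

theorem summed_chebyshev_cells_bound_general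
    {𝒳 : Type*} [MeasurableSpace 𝒳]
    (lam : Measure (𝒳 × ℝ)) [IsProbabilityMeasure lam]
    (μ : Measure 𝒳) (hμ : μ = lam.map Prod.fst)
    (hY : lam {p | p.2 = 1 ∨ p.2 = -1} = 1)
    {n k : ℕ} (hn : 0 < n)
    {Ω : Type*} [MeasurableSpace Ω] (P : Measure Ω) [IsProbabilityMeasure P]
    (Xdat : Fin n → Ω → 𝒳) (Ydat : Fin n → Ω → ℝ)
    (hlaw : ∀ i, P.map (fun ω => (Xdat i ω, Ydat i ω)) = lam)
    (hindep : ProbabilityTheory.iIndepFun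
      (fun i ω => (Xdat i ω, Ydat i ω)) P)
    (A : Fin k → Set 𝒳) (hA : ∀ j, MeasurableSet (A j))
    (hdisj : ∀ j j' : Fin k, j ≠ j' → Disjoint (A j) (A j'))
    (ν : Fin k → ℝ) (hν_def : ∀ j, ν j = ∫ p in {q : 𝒳 × ℝ | q.1 ∈ A j}, p.2 ∂lam) :
    (∑ j : Fin k,
      (P {ω | |(n : ℝ)⁻¹ * (∑ i, Ydat i ω * (A j).indicator (fun _ => (1 : ℝ)) (Xdat i ω))
          - ν j| ≥ |ν j|}).toReal * |ν j|)
      ≤ (1 / Real.sqrt n) * ∑ j : Fin k, Real.sqrt ((μ (A j)).toReal) ∧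
    (1 / Real.sqrt n) * (∑ j : Fin k, Real.sqrt ((μ (A j)).toReal))
      ≤ Real.sqrt (k / n) := by
  subst hμ
  have : IsProbabilityMeasure (lam.map Prod.fst) :=
    Measure.isProbabilityMeasure_map measurable_fst.aemeasurable
  have hYae : ∀ᵐ p ∂lam, p.2 = 1 ∨ p.2 = -1 := by
    have hmeas : MeasurableSet {p : 𝒳 × ℝ | p.2 = 1 ∨ p.2 = -1} :=
      (measurableSet_eq_fun measurable_snd measurable_const).union
        (measurableSet_eq_fun measurable_snd measurable_const)
    rw [ae_iff_measure_eq hmeas.nullMeasurableSet, hY, measure_univ]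
  have hcell : ∀ j, P.real {ω | |empiricalMean (signedIndicator (A j))
      (fun i ω => (Xdat i ω, Ydat i ω)) ω - ν j| ≥ |ν j|} * |ν j|
        ≤ 1 / √n * √((lam.map Prod.fst).real (A j)) := fun j => by
    have := measureReal_abs_empiricalMean_sub_ge_mul_le hn hlaw hindep
      (memLp_signedIndicator (hA j) hYae) (abs_nonneg (ν j))
    rw [integral_signedIndicator (hA j), ← hν_def] at this
    refine this.trans ?_
    rw [one_div, ← Real.sqrt_inv, ← Real.sqrt_mul (by positivity), inv_mul_eq_div]
    gcongr
    exact variance_signedIndicator_le (hA j) hYae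
  refine ⟨?_, ?_⟩
  · rw [Finset.mul_sum]
    exact Finset.sum_le_sum fun j _ => hcell j
  · calc 1 / √n * ∑ j, √((lam.map Prod.fst).real (A j)) ≤ 1 / √n * √k := by
          gcongr
          simpa using sum_sqrt_measureReal_le_sqrt_card hA hdisj
      _ = √(k / n) := by rw [Real.sqrt_div' _ (Nat.cast_nonneg n), one_div_mul_eq_div]

/-- Summed Chebyshev bound over a family of pairwise disjoint cells: with
`ν(A_j) = E[Y·1{X ∈ A_j}]` and `ν_n(A_j) = (1/n)Σ_i Y_i 1{X_i ∈ A_j}`,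
`Σ_j P(|ν_n(A_j) − ν(A_j)| ≥ |ν(A_j)|)·|ν(A_j)| ≤ (1/√n) Σ_j √(μ(A_j)) ≤ √(k/n)`. -/
theorem summed_chebyshev_cells_bound
    {𝒳 : Type*} [MeasurableSpace 𝒳]
    (lam : Measure (𝒳 × ℝ)) [IsProbabilityMeasure lam]
    (μ : Measure 𝒳) (hμ : μ = lam.map Prod.fst)
    (hY : lam {p | p.2 = 1 ∨ p.2 = -1} = 1)
    {n k : ℕ} (hn : 0 < n) (hk : 0 < k)
    {Ω : Type*} [MeasurableSpace Ω] (P : Measure Ω) [IsProbabilityMeasure P]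
    (Xdat : Fin n → Ω → 𝒳) (Ydat : Fin n → Ω → ℝ)
    (hXmeas : ∀ i, Measurable (Xdat i)) (hYmeas : ∀ i, Measurable (Ydat i))
    (hlaw : ∀ i, P.map (fun ω => (Xdat i ω, Ydat i ω)) = lam)
    (hindep : ProbabilityTheory.iIndepFun
      (fun i ω => (Xdat i ω, Ydat i ω)) P)
    (A : Fin k → Set 𝒳) (hA : ∀ j, MeasurableSet (A j))
    (hdisj : ∀ j j' : Fin k, j ≠ j' → Disjoint (A j) (A j'))
    (ν : Fin k → ℝ) (hν_def : ∀ j, ν j = ∫ p in {q : 𝒳 × ℝ | q.1 ∈ A j}, p.2 ∂lam) :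
    (∑ j : Fin k,
      (P {ω | |(n : ℝ)⁻¹ * (∑ i, Ydat i ω * (A j).indicator (fun _ => (1 : ℝ)) (Xdat i ω))
          - ν j| ≥ |ν j|}).toReal * |ν j|)
      ≤ (1 / Real.sqrt n) * ∑ j : Fin k, Real.sqrt ((μ (A j)).toReal) ∧
    (1 / Real.sqrt n) * (∑ j : Fin k, Real.sqrt ((μ (A j)).toReal))
      ≤ Real.sqrt (k / n) :=
  summed_chebyshev_cells_bound_general lam μ hμ hY hn P Xdat Ydat hlaw hindep A hA hdisj ν hν_def
end

section
/- Let (ε_{i,j})_{1 ≤ i ≤ n, 1 ≤ j ≤ k} be i.i.d. standard Laplace random variables, let k ≥ 2 and 0 < ε ≤ 1. Then P( Σ_{j=1}^k | (1/n) Σ_{i=1}^n ε_{i,j} | > ε ) ≤ 2^k · exp(−0.3·ε²·n/k). -/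
/-!
Writing `S_j = ∑ᵢ ε_{i,j}`, the sum `∑ⱼ |S_j|` equals `∑ⱼ σⱼ S_j` for the sign pattern
`σⱼ = sign S_j`, so the event is covered by the `2^k` events `{∑_{i,j} σⱼ ε_{i,j} ≥ n e}`.
Each signed sum is a sum of `nk` independent variables with Laplace moment generating
function `(1 - t²/2)⁻¹`, and the Chernoff bound at `t = e / (2k) ≤ 1/4`, together with
`(1 - u)⁻¹ ≤ exp (32u/31)` for `u ≤ 1/32`, gives the exponent `-(23/62) e² n / k`.
-/

open MeasureTheory Set

/-- The standard Laplace distribution on `ℝ` (centred, unit variance), with density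
`x ↦ (1/√2) e^{−√2|x|}` with respect to Lebesgue measure. -/
noncomputable def stdLaplace : Measure ℝ :=
  volume.withDensity fun x => ENNReal.ofReal ((Real.sqrt 2)⁻¹ * Real.exp (-(Real.sqrt 2 * |x|)))

open Real ProbabilityTheory

namespace StdLaplace

noncomputable def pdf (x : ℝ) : ℝ := (√2)⁻¹ * exp (-(√2 * |x|))

lemma pdf_nonneg (x : ℝ) : 0 ≤ pdf x := by unfold pdf; positivity

lemma measurable_pdf : Measurable pdf := by unfold pdf; fun_prop

lemma exp_mul_mul_pdf_eqOn_Ioi (c : ℝ) :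
    EqOn (fun x => exp (c * x) * pdf x) (fun x => (√2)⁻¹ * exp ((c - √2) * x)) (Ioi 0) := by
  intro x hx
  simp only [pdf, abs_of_pos (mem_Ioi.mp hx), mul_left_comm _ (√2)⁻¹, ← exp_add]
  ring_nf

lemma exp_mul_mul_pdf_eqOn_Iic (c : ℝ) :
    EqOn (fun x => exp (c * x) * pdf x) (fun x => (√2)⁻¹ * exp ((c + √2) * x)) (Iic 0) := by
  intro x hx
  simp only [pdf, abs_of_nonpos (mem_Iic.mp hx), mul_left_comm _ (√2)⁻¹, ← exp_add]
  ring_nf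

lemma integral_exp_mul_mul_pdf {c : ℝ} (hc : |c| < √2) :
    ∫ x, exp (c * x) * pdf x = (1 - c ^ 2 / 2)⁻¹ := by
  obtain ⟨hc_neg, hc_pos⟩ := abs_lt.mp hc
  have hneg : c - √2 < 0 := by linarith
  have hpos : 0 < c + √2 := by linarith
  have h_Ioi : IntegrableOn (fun x => exp (c * x) * pdf x) (Ioi 0) :=
    (integrableOn_congr_fun (exp_mul_mul_pdf_eqOn_Ioi c) measurableSet_Ioi).2
      ((integrableOn_exp_mul_Ioi hneg 0).const_mul _)
  have h_Iic : IntegrableOn (fun x => exp (c * x) * pdf x) (Iic 0) :=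
    (integrableOn_congr_fun (exp_mul_mul_pdf_eqOn_Iic c) measurableSet_Iic).2
      ((integrableOn_exp_mul_Iic hpos 0).const_mul _)
  rw [← setIntegral_univ, ← Iic_union_Ioi (a := 0),
    setIntegral_union (Iic_disjoint_Ioi le_rfl) measurableSet_Ioi h_Iic h_Ioi,
    setIntegral_congr_fun measurableSet_Iic (exp_mul_mul_pdf_eqOn_Iic c),
    setIntegral_congr_fun measurableSet_Ioi (exp_mul_mul_pdf_eqOn_Ioi c),
    integral_const_mul, integral_const_mul, integral_exp_mul_Iic hpos, integral_exp_mul_Ioi hneg]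
  have hsq : √2 ^ 2 = 2 := sq_sqrt zero_le_two
  have h2 : 2 - c ^ 2 ≠ 0 := by nlinarith
  simp only [mul_zero, exp_zero]
  field_simp [hneg.ne, hpos.ne', h2]
  linear_combination 2 * √2 * hsq

lemma stdLaplace_eq_withDensity_pdf :
    stdLaplace = volume.withDensity fun x => ENNReal.ofReal (pdf x) := rfl

end StdLaplace

open StdLaplace in
lemma mgf_id_stdLaplace {c : ℝ} (hc : |c| < √2) : mgf id stdLaplace c = (1 - c ^ 2 / 2)⁻¹ := by
  rw [mgf, stdLaplace_eq_withDensity_pdf, integral_withDensity_eq_integral_toReal_smul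
    measurable_pdf.ennreal_ofReal (ae_of_all _ fun _ => ENNReal.ofReal_lt_top)]
  simp_rw [ENNReal.toReal_ofReal (pdf_nonneg _), smul_eq_mul, id, mul_comm (pdf _)]
  exact integral_exp_mul_mul_pdf hc

section

variable {Ω : Type*} [MeasurableSpace Ω] {P : Measure Ω}

lemma mgf_of_map_eq_stdLaplace {X : Ω → ℝ} (hX : Measurable X) (hlaw : P.map X = stdLaplace)
    {c : ℝ} (hc : |c| < √2) : mgf X P c = (1 - c ^ 2 / 2)⁻¹ := by
  rw [← mgf_id_map hX.aemeasurable, hlaw, mgf_id_stdLaplace hc]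

variable {ι : Type*} [Fintype ι] {X : ι → Ω → ℝ}

lemma mgf_sum_mul_of_iIndepFun_stdLaplace (hmeas : ∀ i, Measurable (X i))
    (hlaw : ∀ i, P.map (X i) = stdLaplace) (hindep : iIndepFun X P)
    {s : ι → ℝ} (hs : ∀ i, |s i| = 1) {t : ℝ} (ht : |t| < √2) :
    mgf (fun ω => ∑ i, s i * X i ω) P t = (1 - t ^ 2 / 2)⁻¹ ^ Fintype.card ι := by
  have hindep' : iIndepFun (fun i ω => s i * X i ω) P :=
    hindep.comp (fun i x => s i * x) fun i => measurable_const_mul _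
  have hst : ∀ i, |s i * t| < √2 := fun i => by rwa [abs_mul, hs i, one_mul]
  have hsq : ∀ i, (s i * t) ^ 2 = t ^ 2 := fun i => by
    rw [mul_pow, ← sq_abs, hs i, one_pow, one_mul]
  calc mgf (fun ω => ∑ i, s i * X i ω) P t = mgf (∑ i, fun ω => s i * X i ω) P t := by
        simp only [Finset.sum_fn]
    _ = ∏ i, mgf (fun ω => s i * X i ω) P t :=
        hindep'.mgf_sum (fun i => (hmeas i).const_mul _) _
    _ = ∏ _i : ι, (1 - t ^ 2 / 2)⁻¹ := by
        refine Finset.prod_congr rfl fun i _ => ?_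
        rw [mgf_const_mul, mgf_of_map_eq_stdLaplace (hmeas i) (hlaw i) (hst i), hsq]
    _ = (1 - t ^ 2 / 2)⁻¹ ^ Fintype.card ι := Finset.prod_const _

lemma measureReal_sum_mul_ge_le_of_iIndepFun_stdLaplace (hmeas : ∀ i, Measurable (X i))
    (hlaw : ∀ i, P.map (X i) = stdLaplace) (hindep : iIndepFun X P)
    {s : ι → ℝ} (hs : ∀ i, |s i| = 1) {t : ℝ} (ht0 : 0 ≤ t) (ht : t < √2) (a : ℝ) :
    P.real {ω | a ≤ ∑ i, s i * X i ω} ≤ exp (-t * a) * (1 - t ^ 2 / 2)⁻¹ ^ Fintype.card ι := by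
  have := hindep.isProbabilityMeasure
  have hmgf :=
    mgf_sum_mul_of_iIndepFun_stdLaplace hmeas hlaw hindep hs (abs_lt.2 ⟨by linarith, ht⟩)
  have ht2 : t ^ 2 < 2 := by nlinarith [sq_sqrt (zero_le_two (α := ℝ)), sqrt_nonneg 2]
  have hint : Integrable (fun ω => exp (t * ∑ i, s i * X i ω)) P := by
    refine Integrable.of_integral_ne_zero ?_
    rw [← mgf, hmgf]
    exact pow_ne_zero _ (inv_ne_zero (by linarith))
  rw [← hmgf]
  exact measure_ge_le_exp_mul_mgf a ht0 hint

end

lemma inv_one_sub_le_exp_div {u δ : ℝ} (hu : 0 ≤ u) (huδ : u ≤ δ) (hδ : δ < 1) :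
    (1 - u)⁻¹ ≤ exp (u / (1 - δ)) := by
  have h1u : 0 < 1 - u := by linarith
  calc (1 - u)⁻¹ = 1 + u / (1 - u) := by field_simp; ring
    _ ≤ 1 + u / (1 - δ) := by gcongr
    _ ≤ exp (u / (1 - δ)) := by linarith [add_one_le_exp (u / (1 - δ))]

lemma exp_neg_mul_mul_inv_one_sub_sq_pow_le {n k : ℕ} (hk : 2 ≤ k) {e : ℝ} (he0 : 0 ≤ e)
    (he1 : e ≤ 1) :
    exp (-(e / (2 * k)) * (n * e)) * (1 - (e / (2 * k)) ^ 2 / 2)⁻¹ ^ (n * k)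
      ≤ exp (-0.3 * e ^ 2 * n / k) := by
  set t := e / (2 * k) with ht
  have hk2 : (2 : ℝ) ≤ k := by exact_mod_cast hk
  have ht0 : 0 ≤ t := by positivity
  have ht4 : t ≤ 1 / 4 := by
    rw [ht, div_le_iff₀ (by positivity)]
    linarith
  have hu : t ^ 2 / 2 ≤ 1 / 32 := by nlinarith
  have hexponent : -t * (n * e) + ((n * k : ℕ) : ℝ) * (t ^ 2 / 2 / (1 - 1 / 32))
      = -(23 / 62) * (e ^ 2 * n / k) := by
    rw [ht]; push_cast; field_simp; ring
  calc exp (-t * (n * e)) * (1 - t ^ 2 / 2)⁻¹ ^ (n * k)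
      ≤ exp (-t * (n * e)) * exp (t ^ 2 / 2 / (1 - 1 / 32)) ^ (n * k) := by
        gcongr
        · exact inv_nonneg.2 (by linarith)
        · exact inv_one_sub_le_exp_div (by positivity) hu (by norm_num)
    _ = exp (-(23 / 62) * (e ^ 2 * n / k)) := by
        rw [← exp_nat_mul, ← exp_add, hexponent]
    _ ≤ exp (-0.3 * e ^ 2 * n / k) := by
        rw [exp_le_exp,
          show (-0.3 : ℝ) * e ^ 2 * n / k = -(3 / 10) * (e ^ 2 * n / k) by norm_num; ring]
        have : 0 ≤ e ^ 2 * n / k := by positivity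
        linarith

noncomputable def signOf {κ : Type*} [DecidableEq κ] (T : Finset κ) (j : κ) : ℝ :=
  if j ∈ T then 1 else -1

lemma abs_signOf {κ : Type*} [DecidableEq κ] (T : Finset κ) (j : κ) : |signOf T j| = 1 := by
  unfold signOf; split_ifs <;> simp

lemma exists_sum_abs_sum_eq_sum_signOf_mul {ι κ : Type*} [Fintype ι] [Fintype κ] [DecidableEq κ]
    (x : ι × κ → ℝ) : ∃ T : Finset κ, ∑ j, |∑ i, x (i, j)| = ∑ p, signOf T p.2 * x p := by
  refine ⟨Finset.univ.filter fun j => 0 ≤ ∑ i, x (i, j), ?_⟩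
  rw [Fintype.sum_prod_type_right]
  refine Finset.sum_congr rfl fun j _ => ?_
  dsimp only
  rw [← Finset.mul_sum]
  by_cases h : 0 ≤ ∑ i, x (i, j)
  · simp [signOf, h, abs_of_nonneg h]
  · simp [signOf, h, abs_of_neg (not_le.1 h)]

/-- If `(ε_{i,j})` for `1 ≤ i ≤ n`, `1 ≤ j ≤ k` are i.i.d. standard Laplace,
`k ≥ 2` and `0 < ε ≤ 1`, then
`P(Σ_j |(1/n) Σ_i ε_{i,j}| > ε) ≤ 2^k · exp(−0.3 ε² n / k)`. -/
theorem laplace_array_deviation_bound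
    {Ω : Type*} [MeasurableSpace Ω] (P : Measure Ω) [IsProbabilityMeasure P]
    {n k : ℕ} (hn : 0 < n) (hk : 2 ≤ k)
    (ε : Fin n × Fin k → Ω → ℝ) (hmeas : ∀ p, Measurable (ε p))
    (hlaw : ∀ p, P.map (ε p) = stdLaplace)
    (hindep : ProbabilityTheory.iIndepFun ε P)
    (e : ℝ) (he0 : 0 < e) (he1 : e ≤ 1) :
    (P {ω | (∑ j : Fin k, |(n : ℝ)⁻¹ * ∑ i : Fin n, ε (i, j) ω|) > e}).toReal
      ≤ 2 ^ k * Real.exp (-0.3 * e ^ 2 * n / k) := by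
  set t := e / (2 * k)
  have ht0 : 0 ≤ t := by positivity
  have ht : t < √2 := by
    have : t ≤ 1 / 4 := by
      rw [div_le_iff₀ (by positivity)]
      linarith [show (2 : ℝ) ≤ k by exact_mod_cast hk]
    linarith [one_lt_sqrt_two]
  have hsub : {ω | ∑ j, |(n : ℝ)⁻¹ * ∑ i, ε (i, j) ω| > e}
      ⊆ ⋃ T : Finset (Fin k), {ω | n * e ≤ ∑ p, signOf T p.2 * ε p ω} := by
    intro ω hω
    obtain ⟨T, hT⟩ := exists_sum_abs_sum_eq_sum_signOf_mul fun p => ε p ω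
    refine mem_iUnion.2 ⟨T, ?_⟩
    simp only [mem_ofPred_eq, abs_mul, abs_inv, Nat.abs_cast, ← Finset.mul_sum, hT] at hω ⊢
    rw [gt_iff_lt, lt_inv_mul_iff₀ (by exact_mod_cast hn)] at hω
    exact hω.le
  calc (P _).toReal ≤ P.real (⋃ T : Finset (Fin k), {ω | n * e ≤ ∑ p, signOf T p.2 * ε p ω}) :=
        measureReal_mono hsub
    _ ≤ ∑ T : Finset (Fin k), P.real {ω | n * e ≤ ∑ p, signOf T p.2 * ε p ω} :=
        measureReal_iUnion_fintype_le _
    _ ≤ ∑ _T : Finset (Fin k), exp (-t * (n * e)) * (1 - t ^ 2 / 2)⁻¹ ^ (n * k) := by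
        gcongr with T
        simpa only [Fintype.card_prod, Fintype.card_fin] using
          measureReal_sum_mul_ge_le_of_iIndepFun_stdLaplace hmeas hlaw hindep
            (fun p => abs_signOf T p.2) ht0 ht (n * e)
    _ ≤ 2 ^ k * exp (-0.3 * e ^ 2 * n / k) := by
        rw [Finset.sum_const, Finset.card_univ, Fintype.card_finset, Fintype.card_fin,
          nsmul_eq_mul]
        push_cast
        gcongr
        exact exp_neg_mul_mul_inv_one_sub_sq_pow_le hk he0.le he1
end
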